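/- For a smooth vector field E satisfying the vector Helmholtz equation ΔE + k²E = 0 on an open subset of ℝ³, the identity 2(∇·E) = Δ(x·E) + k²(x·E) holds, where x is the position vector. Consequently, if the scalar field x·E satisfies the scalar Helmholtz equation, then ∇·E = 0. -/

import Mathlib

open Filter Topology MeasureTheory Complex
open scoped RealInnerProductSpace MeasureTheory

noncomputable section

abbrev E3 := EuclideanSpace ℝ (Fin 3)

def e3 (i : Fin 3) : E3 := EuclideanSpace.single i 1

/-- Partial derivative of a complex-valued function in the i-th coordinate direction. -/
noncomputable def pdC (i : Fin 3) (f : E3 → ℂ) (x : E3) : ℂ := fderiv ℝ f x (e3 i)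

/-- Laplacian of a complex-valued function. -/
noncomputable def lapC (f : E3 → ℂ) (x : E3) : ℂ := ∑ i, pdC i (pdC i f) x

/-- Partial derivative of a real-valued function. -/
noncomputable def pdR (i : Fin 3) (f : E3 → ℝ) (x : E3) : ℝ := fderiv ℝ f x (e3 i)

/-- Laplacian of a real-valued function. -/
noncomputable def lapR (f : E3 → ℝ) (x : E3) : ℝ := ∑ i, pdR i (pdR i f) x

/-- Divergence of a vector field. -/
noncomputable def divR (F : E3 → E3) (x : E3) : ℝ := ∑ i, pdR i (fun y => F y i) x

/-- Cross product in ℝ³. -/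
def cross3 (a b : E3) : E3 :=
  (WithLp.equiv 2 (Fin 3 → ℝ)).symm
    ![a 1 * b 2 - a 2 * b 1, a 2 * b 0 - a 0 * b 2, a 0 * b 1 - a 1 * b 0]

/-- Curl of a vector field in ℝ³. -/
noncomputable def curl3 (F : E3 → E3) (x : E3) : E3 :=
  (WithLp.equiv 2 (Fin 3 → ℝ)).symm
    ![pdR 1 (fun y => F y 2) x - pdR 2 (fun y => F y 1) x,
      pdR 2 (fun y => F y 0) x - pdR 0 (fun y => F y 2) x,
      pdR 0 (fun y => F y 1) x - pdR 1 (fun y => F y 0) x]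

lemma contDiff_pdC {f : E3 → ℂ} (hf : ContDiff ℝ (⊤ : ℕ∞) f) (j : Fin 3) :
    ContDiff ℝ (⊤ : ℕ∞) (pdC j f) :=
  (ContinuousLinearMap.apply ℝ ℂ (e3 j)).contDiff.comp (hf.fderiv_right (by simp))

lemma pdC_mul {g h : E3 → ℂ} (j : Fin 3) (x : E3)
    (hg : DifferentiableAt ℝ g x) (hh : DifferentiableAt ℝ h x) :
    pdC j (fun y => g y * h y) x = pdC j g x * h x + g x * pdC j h x := by
  unfold pdC
  rw [fderiv_fun_mul hg hh]
  simp only [ContinuousLinearMap.add_apply, ContinuousLinearMap.smul_apply, smul_eq_mul]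
  ring

lemma pdC_add {g h : E3 → ℂ} (j : Fin 3) (x : E3)
    (hg : DifferentiableAt ℝ g x) (hh : DifferentiableAt ℝ h x) :
    pdC j (fun y => g y + h y) x = pdC j g x + pdC j h x := by
  unfold pdC
  rw [fderiv_fun_add hg hh]
  simp

lemma pdC_const_mul (c : ℂ) {f : E3 → ℂ} (j : Fin 3) (x : E3)
    (hf : DifferentiableAt ℝ f x) :
    pdC j (fun y => c * f y) x = c * pdC j f x := by
  unfold pdC
  rw [fderiv_const_mul hf]
  simp

lemma pdC_sum {ι : Type*} (s : Finset ι) (f : ι → E3 → ℂ) (j : Fin 3) (x : E3)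
    (hf : ∀ i ∈ s, DifferentiableAt ℝ (f i) x) :
    pdC j (fun y => ∑ i ∈ s, f i y) x = ∑ i ∈ s, pdC j (f i) x := by
  unfold pdC
  rw [fderiv_fun_sum hf]
  simp

lemma coord_contDiff (i : Fin 3) : ContDiff ℝ (⊤ : ℕ∞) (fun y : E3 => (y i : ℂ)) :=
  (Complex.ofRealCLM.comp (EuclideanSpace.proj i : E3 →L[ℝ] ℝ)).contDiff

lemma pdC_coord (i j : Fin 3) (x : E3) :
    pdC j (fun y : E3 => (y i : ℂ)) x = if i = j then 1 else 0 := by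
  have h : (fun y : E3 => (y i : ℂ)) =
      ⇑(Complex.ofRealCLM.comp (EuclideanSpace.proj i : E3 →L[ℝ] ℝ)) := rfl
  unfold pdC
  rw [h, ContinuousLinearMap.fderiv]
  rcases eq_or_ne i j with h' | h' <;>
    simp [h', e3, EuclideanSpace.proj, EuclideanSpace.single_apply, eq_comm]

lemma lap_xdotE (F : Fin 3 → E3 → ℂ) (hF : ∀ i, ContDiff ℝ (⊤ : ℕ∞) (F i)) (x : E3) :
    lapC (fun y => ∑ i, (y i : ℂ) * F i y) x
      = 2 * ∑ i, pdC i (F i) x + ∑ i, (x i : ℂ) * lapC (F i) x := by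
  have hd0 : ∀ i : Fin 3, Differentiable ℝ (fun y : E3 => (y i : ℂ)) := fun i =>
    (coord_contDiff i).differentiable (by simp)
  have hd1 : ∀ i : Fin 3, Differentiable ℝ (F i) := fun i => (hF i).differentiable (by simp)
  have hd2 : ∀ i j : Fin 3, Differentiable ℝ (pdC j (F i)) := fun i j =>
    (contDiff_pdC (hF i) j).differentiable (by simp)
  have step1 : ∀ j : Fin 3, pdC j (fun y => ∑ i, (y i : ℂ) * F i y)
      = fun z => ∑ i, ((if i = j then 1 else 0) * F i z + (z i : ℂ) * pdC j (F i) z) := by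
    intro j; funext z
    rw [pdC_sum _ _ _ _ (fun i _ => (hd0 i z).fun_mul (hd1 i z))]
    refine Finset.sum_congr rfl fun i _ => ?_
    rw [pdC_mul j z (hd0 i z) (hd1 i z), pdC_coord]
  have step2 : ∀ j : Fin 3, pdC j (pdC j (fun y => ∑ i, (y i : ℂ) * F i y)) x
      = ∑ i, ((if i = j then 1 else 0) * pdC j (F i) x
            + ((if i = j then 1 else 0) * pdC j (F i) x
              + (x i : ℂ) * pdC j (pdC j (F i)) x)) := by
    intro j
    rw [step1 j]
    rw [pdC_sum _ _ _ _ (fun i _ =>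
      (((hd1 i x).const_mul _).fun_add ((hd0 i x).fun_mul (hd2 i j x)) :))]
    refine Finset.sum_congr rfl fun i _ => ?_
    rw [pdC_add j x ((hd1 i x).const_mul _) ((hd0 i x).fun_mul (hd2 i j x)),
        pdC_const_mul _ j x (hd1 i x), pdC_mul j x (hd0 i x) (hd2 i j x), pdC_coord]
  simp only [lapC]
  simp only [step2]
  simp only [Fin.sum_univ_three]
  simp only [Fin.reduceEq, if_true, if_false, reduceIte, one_mul, zero_mul, zero_add, add_zero]
  ring

/-- For a smooth vector field `E` satisfying the vector Helmholtz equation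
`ΔE + k²E = 0` on an open set, `2(∇·E) = Δ(x·E) + k²(x·E)`; consequently if `x·E` satisfies
the scalar Helmholtz equation, then `∇·E = 0`. -/
theorem stmt5 (Ω : Set E3) (hΩ : IsOpen Ω) (k : ℂ) (F : Fin 3 → E3 → ℂ)
    (hF : ∀ i, ContDiff ℝ (⊤ : ℕ∞) (F i))
    (hHelm : ∀ i, ∀ x ∈ Ω, lapC (F i) x + k ^ 2 * F i x = 0) :
    (∀ x ∈ Ω, 2 * (∑ i, pdC i (F i) x) =
      lapC (fun y => ∑ i, (y i : ℂ) * F i y) x + k ^ 2 * ∑ i, (x i : ℂ) * F i x) ∧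
    ((∀ x ∈ Ω, lapC (fun y => ∑ i, (y i : ℂ) * F i y) x
        + k ^ 2 * (∑ i, (x i : ℂ) * F i x) = 0) →
      ∀ x ∈ Ω, ∑ i, pdC i (F i) x = 0) := by
  have part1 : ∀ x ∈ Ω, 2 * (∑ i, pdC i (F i) x) =
      lapC (fun y => ∑ i, (y i : ℂ) * F i y) x + k ^ 2 * ∑ i, (x i : ℂ) * F i x := by
    intro x hx
    rw [lap_xdotE F hF x]
    have h : ∑ i, (x i : ℂ) * lapC (F i) x = -(k ^ 2 * ∑ i, (x i : ℂ) * F i x) := by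
      rw [Finset.mul_sum, ← Finset.sum_neg_distrib]
      refine Finset.sum_congr rfl fun i _ => ?_
      have h := hHelm i x hx
      have h2 : lapC (F i) x = -(k ^ 2 * F i x) := by linear_combination h
      rw [h2]; ring
    rw [h]; ring
  refine ⟨part1, fun hsc x hx => ?_⟩
  have h := part1 x hx
  rw [hsc x hx] at h
  have h2 : (2 : ℂ) ≠ 0 := by norm_num
  exact (mul_eq_zero.mp h).resolve_left h2
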